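/- For every n ≥ 5, the matroid D_n has a unique 2-element cocircuit {x,y} (its unique series pair), and the contraction D_n/{x,y} is isomorphic to the uniform matroid U_{n−2,2n−2}. -/

import Mathlib

open Set Matroid

variable {α : Type*}

/-- `N` is a transversal presentation of the matroid `M`: the independent sets of `M` are
exactly the partial transversals of the family `N`, i.e. the subsets of the ground set
admitting an injection `φ` into the index set with `x ∈ N (φ x)` for all `x`. -/
def IsTransversalPresentation (M : Matroid α) {r : ℕ} (N : Fin r → Set α) : Prop :=
  (∀ i, N i ⊆ M.E) ∧
    ∀ I : Set α, M.Indep I ↔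
      I ⊆ M.E ∧ ∃ φ : I → Fin r, Function.Injective φ ∧ ∀ x : I, (x : α) ∈ N (φ x)

/-- A matroid is bicircular if it has a transversal presentation in which every set of the
presentation has at most two elements. -/
def Bicircular (M : Matroid α) : Prop :=
  ∃ (r : ℕ) (N : Fin r → Set α), IsTransversalPresentation M N ∧ ∀ i, (N i).encard ≤ 2

/-- `M` is a matroid on ground set `{1, …, m + r}` with a standard (lattice path)
presentation consisting of the intervals `[l i, u i]`, where the lower endpoints and the
upper endpoints each form strictly increasing chains. -/
def IsStandardPresentation (M : Matroid ℕ) (m : ℕ) {r : ℕ} (l u : Fin r → ℕ) : Prop :=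
  M.E = Set.Icc 1 (m + r) ∧ StrictMono l ∧ StrictMono u ∧
    (∀ i, 1 ≤ l i ∧ l i ≤ u i ∧ u i ≤ m + r) ∧
    IsTransversalPresentation M (fun i => Set.Icc (l i) (u i))

/-- A matroid is a lattice path matroid if it is isomorphic (via a bijection `g` of ground
sets) to a transversal matroid on `{1, …, m + r}` whose presentation consists of intervals
`[l i, u i]` with both endpoint sequences strictly increasing. -/
def LatticePath (M : Matroid α) : Prop :=
  ∃ (r m : ℕ) (g : ℕ → α) (l u : Fin r → ℕ),
    Set.InjOn g (Set.Icc 1 (m + r)) ∧ g '' Set.Icc 1 (m + r) = M.E ∧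
    StrictMono l ∧ StrictMono u ∧ (∀ i, 1 ≤ l i ∧ l i ≤ u i ∧ u i ≤ m + r) ∧
    IsTransversalPresentation M (fun i => g '' Set.Icc (l i) (u i))

/-- The class of matroids that are both bicircular and lattice path. -/
def BicircLP (M : Matroid α) : Prop := Bicircular M ∧ LatticePath M

/-- Deletion of the set `D` from the matroid `M`. -/
def MDel (M : Matroid α) (D : Set α) : Matroid α := M ↾ (M.E \ D)

/-- Contraction of the set `C` in the matroid `M`. -/
def MCon (M : Matroid α) (C : Set α) : Matroid α := (M✶ ↾ (M.E \ C))✶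

/-- `N` is a minor of `M`: it is obtained from `M` by contracting a set and deleting a set. -/
def IsMinorOf (N M : Matroid α) : Prop :=
  ∃ C D : Set α, C ⊆ M.E ∧ D ⊆ M.E ∧ Disjoint C D ∧ N = MDel (MCon M C) D

/-- `N` is a proper minor of `M`: a minor on a proper subset of the ground set. -/
def IsProperMinorOf (N M : Matroid α) : Prop := IsMinorOf N M ∧ N.E ⊂ M.E

/-- `M` is an excluded minor for the class `𝒞`: `M` is not in `𝒞`, but every proper minor
of `M` is in `𝒞`. -/
def IsExcludedMinor (𝒞 : Matroid α → Prop) (M : Matroid α) : Prop :=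
  ¬ 𝒞 M ∧ ∀ N : Matroid α, IsProperMinorOf N M → 𝒞 N

/-- The rank of the set `X` in `M`: the supremum of the cardinalities of independent
subsets of `X`. -/
noncomputable def eRk (M : Matroid α) (X : Set α) : ℕ∞ :=
  ⨆ I : {I : Set α // M.Indep I ∧ I ⊆ X}, (I : Set α).encard

/-- The rank of the matroid `M`. -/
noncomputable def eRank (M : Matroid α) : ℕ∞ := _root_.eRk M M.E

/-- `M` is vertically 3-connected: it has no vertical `k`-separation for `k < 3`, i.e. no
partition `(A, B)` of the ground set with `|A| ≥ k`, `|B| ≥ k`, `r A ≥ k`, `r B ≥ k` and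
`r A + r B - r M < k`. -/
def VerticallyThreeConnected (M : Matroid α) : Prop :=
  ∀ k : ℕ, 0 < k → k < 3 → ∀ A B : Set α, A ∪ B = M.E → Disjoint A B →
    ¬ ((k : ℕ∞) ≤ A.encard ∧ (k : ℕ∞) ≤ B.encard ∧ (k : ℕ∞) ≤ _root_.eRk M A ∧
        (k : ℕ∞) ≤ _root_.eRk M B ∧ _root_.eRk M A + _root_.eRk M B < _root_.eRank M + (k : ℕ∞))

/-- A circuit of a matroid: a minimal dependent set. -/
def IsCircuit (M : Matroid α) (C : Set α) : Prop :=
  M.Dep C ∧ ∀ D : Set α, D ⊂ C → M.Indep D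

/-- `P` is a parallel class of `M`: a maximal set of pairwise parallel non-loop elements. -/
def IsParallelClass (M : Matroid α) (P : Set α) : Prop :=
  P.Nonempty ∧ P ⊆ M.E ∧ (∀ a ∈ P, M.Indep {a}) ∧
    (∀ a ∈ P, ∀ b ∈ P, a ≠ b → ¬ M.Indep {a, b}) ∧
    ∀ c ∈ M.E, M.Indep {c} → (∀ a ∈ P, a ≠ c → ¬ M.Indep {a, c}) → c ∈ P

/-- `M` is isomorphic to the uniform matroid `U_{a,b}`: its ground set has `b` elements and
its independent sets are the subsets of the ground set with at most `a` elements. -/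
def IsUnifIso (a b : ℕ) (M : Matroid α) : Prop :=
  M.E.encard = (b : ℕ∞) ∧ ∀ I : Set α, M.Indep I ↔ I ⊆ M.E ∧ I.encard ≤ (a : ℕ∞)

/-- `M` is the direct sum of `M₁` and `M₂` (which have disjoint ground sets). -/
def IsDirectSumOf (M M₁ M₂ : Matroid α) : Prop :=
  Disjoint M₁.E M₂.E ∧ M.E = M₁.E ∪ M₂.E ∧
    ∀ I : Set α, M.Indep I ↔ I ⊆ M.E ∧ M₁.Indep (I ∩ M₁.E) ∧ M₂.Indep (I ∩ M₂.E)

/-- `M` is the truncation `T_n(M₀)` to rank `n` of the matroid `M₀` (of rank at least `n`):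
its independent sets are the independent sets of `M₀` with at most `n` elements. -/
def IsTruncationOf (n : ℕ) (M₀ M : Matroid α) : Prop :=
  (n : ℕ∞) ≤ _root_.eRank M₀ ∧ M.E = M₀.E ∧
    ∀ I : Set α, M.Indep I ↔ M₀.Indep I ∧ I.encard ≤ (n : ℕ∞)

/-- `M` is the free extension `M₀ + x` of `M₀` by the new element `x`: its independent sets
are the independent sets `I` of `M₀`, together with the sets `I ∪ {x}` for `I` independent
in `M₀` with `|I| ≤ r(M₀) - 1`. -/
def IsFreeExtOf (M₀ M : Matroid α) (x : α) : Prop :=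
  x ∉ M₀.E ∧ M.E = insert x M₀.E ∧
    ∀ I : Set α, M.Indep I ↔
      ((x ∉ I ∧ M₀.Indep I) ∨
        (x ∈ I ∧ M₀.Indep (I \ {x}) ∧ (I \ {x}).encard + 1 ≤ _root_.eRank M₀))

/-- `M` is isomorphic to `T_3(U_{1,2} ⊕ U_{3,5})`. -/
def IsT3U12U35 (M : Matroid α) : Prop :=
  ∃ M₁ M₂ M₀ : Matroid α, IsUnifIso 1 2 M₁ ∧ IsUnifIso 3 5 M₂ ∧ IsDirectSumOf M₀ M₁ M₂ ∧
    IsTruncationOf 3 M₀ M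

/-- `M` is isomorphic to `T_3(U_{1,2} ⊕ U_{1,2} ⊕ U_{3,3})`. -/
def IsT3U12U12U33 (M : Matroid α) : Prop :=
  ∃ M₁ M₂ M₃ M₁₂ M₀ : Matroid α, IsUnifIso 1 2 M₁ ∧ IsUnifIso 1 2 M₂ ∧ IsUnifIso 3 3 M₃ ∧
    IsDirectSumOf M₁₂ M₁ M₂ ∧ IsDirectSumOf M₀ M₁₂ M₃ ∧ IsTruncationOf 3 M₀ M

/-- `M` is isomorphic to `T_4(U_{1,2} ⊕ U_{4,5})`. -/
def IsT4U12U45 (M : Matroid α) : Prop :=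
  ∃ M₁ M₂ M₀ : Matroid α, IsUnifIso 1 2 M₁ ∧ IsUnifIso 4 5 M₂ ∧ IsDirectSumOf M₀ M₁ M₂ ∧
    IsTruncationOf 4 M₀ M

/-- `M` is isomorphic to `T_4(U_{3,4} ⊕ U_{3,3})`. -/
def IsT4U34U33 (M : Matroid α) : Prop :=
  ∃ M₁ M₂ M₀ : Matroid α, IsUnifIso 3 4 M₁ ∧ IsUnifIso 3 3 M₂ ∧ IsDirectSumOf M₀ M₁ M₂ ∧
    IsTruncationOf 4 M₀ M

/-- `M` is isomorphic to `P_n = T_n(U_{n-1,n} ⊕ U_{n-1,n})`. -/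
def IsP (n : ℕ) (M : Matroid α) : Prop :=
  ∃ M₁ M₂ M₀ : Matroid α, IsUnifIso (n - 1) n M₁ ∧ IsUnifIso (n - 1) n M₂ ∧
    IsDirectSumOf M₀ M₁ M₂ ∧ IsTruncationOf n M₀ M

/-- `M` is isomorphic to `P_n' = (P_{n-1}✶ + e)✶`, the free coextension of `P_{n-1}`. -/
def IsP' (n : ℕ) (M : Matroid α) : Prop :=
  ∃ (N : Matroid α) (e : α), IsP (n - 1) N ∧ IsFreeExtOf N✶ M✶ e

/-- `M` is isomorphic to `A_n = P_n' + x`. -/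
def IsA (n : ℕ) (M : Matroid α) : Prop :=
  ∃ (N : Matroid α) (x : α), IsP' n N ∧ IsFreeExtOf N M x

/-- `M` is isomorphic to `B_{n,k} = T_n(U_{n-1,n} ⊕ U_{n-1,n} ⊕ U_{k-1,k})`. -/
def IsB (n k : ℕ) (M : Matroid α) : Prop :=
  ∃ M₁ M₂ M₃ M₁₂ M₀ : Matroid α, IsUnifIso (n - 1) n M₁ ∧ IsUnifIso (n - 1) n M₂ ∧
    IsUnifIso (k - 1) k M₃ ∧ IsDirectSumOf M₁₂ M₁ M₂ ∧ IsDirectSumOf M₀ M₁₂ M₃ ∧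
    IsTruncationOf n M₀ M

/-- `M` is isomorphic to `C_{n+k,k} = B_{n,k}✶`. -/
def IsC (n k : ℕ) (M : Matroid α) : Prop := IsB n k M✶

/-- `M` is isomorphic to `D_n = (P_{n-1} ⊕ U_{1,1}) + x`. -/
def IsD (n : ℕ) (M : Matroid α) : Prop :=
  ∃ (P U S : Matroid α) (x : α), IsP (n - 1) P ∧ IsUnifIso 1 1 U ∧ IsDirectSumOf S P U ∧
    IsFreeExtOf S M x

/-- `M` is isomorphic to `E_n = D_n✶`. -/
def IsE (n : ℕ) (M : Matroid α) : Prop := IsD n M✶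

/-- `M` is isomorphic to the rank-3 whirl `𝒲³`, the transversal matroid on `{1, …, 6}` with
presentation `({1,3,4}, {1,2,5}, {2,3,6})`. -/
def IsWhirl3 (M : Matroid α) : Prop :=
  ∃ g : ℕ → α, Set.InjOn g (Set.Icc 1 6) ∧ g '' Set.Icc 1 6 = M.E ∧
    IsTransversalPresentation M ![g '' {1, 3, 4}, g '' {1, 2, 5}, g '' {2, 3, 6}]

/-- `M` is isomorphic to `R₃`, the transversal matroid on `{1, …, 7}` with presentation
`({1,2}, {1,3,4,5}, {2,3,6,7})`. -/
def IsR3 (M : Matroid α) : Prop :=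
  ∃ g : ℕ → α, Set.InjOn g (Set.Icc 1 7) ∧ g '' Set.Icc 1 7 = M.E ∧
    IsTransversalPresentation M ![g '' {1, 2}, g '' {1, 3, 4, 5}, g '' {2, 3, 6, 7}]

/-- `M` is isomorphic to `R₄`, the transversal matroid on `{1, …, 7}` with presentation
`({1,2}, {1,3,4,5}, {2,3,6,7}, {6,7})`. -/
def IsR4 (M : Matroid α) : Prop :=
  ∃ g : ℕ → α, Set.InjOn g (Set.Icc 1 7) ∧ g '' Set.Icc 1 7 = M.E ∧
    IsTransversalPresentation M
      ![g '' {1, 2}, g '' {1, 3, 4, 5}, g '' {2, 3, 6, 7}, g '' {6, 7}]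

/-- `M` is isomorphic to the rank-3 wheel `𝒲₃`, the cycle matroid of `K₄`: the elements
correspond bijectively to the edges of the complete graph on four vertices, and a set is
independent if and only if the corresponding edge set is acyclic. -/
def IsWheel3 (M : Matroid α) : Prop :=
  ∃ f : α → Sym2 (Fin 4),
    Set.InjOn f M.E ∧ (∀ x ∈ M.E, ¬ (f x).IsDiag) ∧
    (∀ p : Sym2 (Fin 4), ¬ p.IsDiag → ∃ x ∈ M.E, f x = p) ∧
    ∀ I : Set α, M.Indep I ↔ I ⊆ M.E ∧ (SimpleGraph.fromEdgeSet (f '' I)).IsAcyclic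


/-! Write `D_n`, `n = k + 2`, on `E₁ ∪ E₂ ∪ {x, y}`: `P_{k+1}` lives on `E₁ ∪ E₂` with
`|E₁| = |E₂| = k + 1`, `y` is the coloop of the `U_{1,1}` summand and `x` is the free element.
Unwinding the definitions, `I` is independent iff `|I| ≤ k + 2`, `|I ∩ (E₁ ∪ E₂)| ≤ k + 1` and
`|I ∩ Eᵢ| ≤ k`. A base (of size `k + 2`) therefore cannot avoid both `x` and `y`, while adding
either of them to a `(k + 1)`-set meeting both `Eᵢ` gives a base avoiding the other, so `{x, y}`
is a cocircuit. Any other 2-set misses `x` or `y` and is avoided by such a base or, if it lies in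
`E₁ ∪ E₂`, by `{x, y}` together with `k` elements outside it. Finally `{x, y}` is independent, so
`I ⊆ E₁ ∪ E₂` is independent in `D_n / {x, y}` iff `I ∪ {x, y}` is in `D_n`, i.e. iff `|I| ≤ k`. -/

theorem isCircuit_iff_matroid_isCircuit {M : Matroid α} {C : Set α} :
    _root_.IsCircuit M C ↔ M.IsCircuit C := by
  rw [Matroid.isCircuit_iff_forall_ssubset]
  rfl

theorem eRank_eq_matroid_eRank (M : Matroid α) : _root_.eRank M = M.eRank := by
  refine le_antisymm (iSup_le fun I => I.2.1.encard_le_eRank) ?_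
  obtain ⟨B, hB⟩ := M.exists_isBase
  exact hB.encard_eq_eRank ▸ le_iSup (fun I : {I // M.Indep I ∧ I ⊆ M.E} => (I : Set α).encard)
    ⟨B, hB.indep, hB.subset_ground⟩

theorem le_encard_sdiff_of_encard_inter_le {s t : Set α} {a b : ℕ∞} (hb : b ≠ ⊤)
    (hs : a + b ≤ s.encard) (ht : (s ∩ t).encard ≤ b) : a ≤ (s \ t).encard := by
  rw [← ENat.add_le_add_iff_right hb]
  calc a + b ≤ s.encard := hs
    _ = (s \ t).encard + (s ∩ t).encard := (Set.encard_sdiff_add_encard_inter s t).symm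
    _ ≤ (s \ t).encard + b := add_le_add_right ht _

namespace Matroid

variable {M : Matroid α} {B I : Set α}

theorem eRank_eq_of_indep_of_forall_encard_le {r : ℕ∞} (hI : M.Indep I) (hIr : I.encard = r)
    (h : ∀ J, M.Indep J → J.encard ≤ r) : M.eRank = r := by
  obtain ⟨B, hB, hIB⟩ := hI.exists_isBase_superset
  rw [← hB.encard_eq_eRank]
  exact le_antisymm (h B hB.indep) (hIr ▸ Set.encard_le_encard hIB)

theorem isBase_iff_indep_encard_eq {r : ℕ} (hI : M.Indep I) (hIr : I.encard = r)
    (h : ∀ J, M.Indep J → J.encard ≤ r) : M.IsBase B ↔ M.Indep B ∧ B.encard = r := by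
  refine ⟨fun hB => ⟨hB.indep, ?_⟩, fun ⟨hB, hBr⟩ => ?_⟩
  · rw [hB.encard_eq_eRank, eRank_eq_of_indep_of_forall_encard_le hI hIr h]
  · obtain ⟨B', hB', hBB'⟩ := hB.exists_isBase_superset
    have hB'r := h B' hB'.indep
    rwa [(Set.finite_of_encard_le_coe hB'r).eq_of_subset_of_encard_le' hBB' (hBr ▸ hB'r)]

theorem isCircuit_dual_pair {x y : α} (hmeet : ∀ B, M.IsBase B → x ∈ B ∨ y ∈ B)
    (hx : ∃ B, M.IsBase B ∧ x ∉ B) (hy : ∃ B, M.IsBase B ∧ y ∉ B) : M✶.IsCircuit {x, y} := by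
  obtain ⟨Bx, hBx, hxBx⟩ := hx
  obtain ⟨By, hBy, hyBy⟩ := hy
  have hxE : x ∈ M.E := hBy.subset_ground ((hmeet By hBy).resolve_right hyBy)
  have hyE : y ∈ M.E := hBx.subset_ground ((hmeet Bx hBx).resolve_left hxBx)
  refine isCircuit_iff_forall_ssubset.2 ⟨dual_dep_iff_forall.2 ⟨fun B hB => ?_, ?_⟩, fun D hD => ?_⟩
  · rcases hmeet B hB with h | h
    exacts [⟨x, Or.inl rfl, h⟩, ⟨y, Or.inr rfl, h⟩]
  · exact Set.pair_subset hxE hyE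
  rw [dual_indep_iff_exists']
  refine ⟨hD.subset.trans (Set.pair_subset hxE hyE), ?_⟩
  obtain hxD | hyD : x ∉ D ∨ y ∉ D := by
    by_contra! h
    exact hD.not_subset (Set.pair_subset h.1 h.2)
  · refine ⟨By, hBy, Set.disjoint_left.2 fun a haD haB => ?_⟩
    rcases hD.subset haD with rfl | rfl
    exacts [hxD haD, hyBy haB]
  · refine ⟨Bx, hBx, Set.disjoint_left.2 fun a haD haB => ?_⟩
    rcases hD.subset haD with rfl | rfl
    exacts [hxBx haB, hyD haD]

end Matroid

theorem IsFreeExtOf.indep_iff {M₀ M : Matroid α} {x : α} (h : IsFreeExtOf M₀ M x) (I : Set α) :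
    M.Indep I ↔ M₀.Indep (I \ {x}) ∧ I.encard ≤ M₀.eRank := by
  rw [h.2.2, eRank_eq_matroid_eRank]
  by_cases hx : x ∈ I
  · simp [hx, Set.encard_sdiff_singleton_add_one hx]
  · simp only [hx, not_false_eq_true, true_and, Set.sdiff_singleton_eq_self hx, false_and, or_false]
    exact ⟨fun h => ⟨h, h.encard_le_eRank⟩, And.left⟩

theorem IsDirectSumOf.indep_iff_of_indep_ground {M M₁ M₂ : Matroid α} (h : IsDirectSumOf M M₁ M₂)
    (h₂ : M₂.Indep M₂.E) (I : Set α) : M.Indep I ↔ I ⊆ M.E ∧ M₁.Indep (I ∩ M₁.E) := by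
  rw [h.2.2]
  exact ⟨fun h => ⟨h.1, h.2.1⟩, fun h => ⟨h.1, h.2, h₂.subset Set.inter_subset_right⟩⟩

theorem IsP.exists_indep_iff {P : Matroid α} {k : ℕ} (hP : IsP (k + 1) P) :
    ∃ E₁ E₂ : Set α, Disjoint E₁ E₂ ∧ E₁.encard = k + 1 ∧ E₂.encard = k + 1 ∧ P.E = E₁ ∪ E₂ ∧
      ∀ I, P.Indep I ↔ I ⊆ E₁ ∪ E₂ ∧ I.encard ≤ k + 1 ∧ (I ∩ E₁).encard ≤ k ∧
        (I ∩ E₂).encard ≤ k := by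
  obtain ⟨M₁, M₂, M₀, h₁, h₂, hsum, htr⟩ := hP
  simp only [add_tsub_cancel_right] at h₁ h₂
  refine ⟨M₁.E, M₂.E, hsum.1, mod_cast h₁.1, mod_cast h₂.1, htr.2.1.trans hsum.2.1, fun I => ?_⟩
  rw [htr.2.2, hsum.2.2, h₁.2, h₂.2, ← hsum.2.1]
  simp only [Set.inter_subset_right, true_and]
  push_cast
  tauto

theorem exists_subset_sdiff_encard_eq_inter_le {E₁ E₂ C : Set α} {k : ℕ} (hk : 1 ≤ k)
    (hd : Disjoint E₁ E₂) (h₁ : E₁.encard = k + 1) (h₂ : E₂.encard = k + 1)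
    (hC : (C ∩ (E₁ ∪ E₂)).encard ≤ 1) :
    ∃ B ⊆ (E₁ ∪ E₂) \ C, B.encard = k + 1 ∧ (B ∩ E₁).encard ≤ k ∧ (B ∩ E₂).encard ≤ k := by
  have hCE : ∀ {E}, E ⊆ E₁ ∪ E₂ → (E ∩ C).encard ≤ 1 := fun {E} hE =>
    (Set.encard_le_encard (t := C ∩ (E₁ ∪ E₂)) fun _ ha => ⟨ha.2, hE ha.1⟩).trans hC
  have hkE : ∀ {E}, E ⊆ E₁ ∪ E₂ → E.encard = k + 1 → (k : ℕ∞) ≤ (E \ C).encard := fun {E} hE hEk =>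
    le_encard_sdiff_of_encard_inter_le ENat.one_ne_top hEk.ge (hCE hE)
  obtain ⟨a, ha⟩ : (E₁ \ C).Nonempty := Set.one_le_encard_iff_nonempty.1 <|
    le_trans (mod_cast hk) (hkE Set.subset_union_left h₁)
  obtain ⟨T, hT, hTk⟩ := Set.exists_subset_encard_eq (hkE Set.subset_union_right h₂)
  have haT : a ∉ T := fun h => hd.notMem_of_mem_left ha.1 (hT h).1
  refine ⟨insert a T, Set.insert_subset ⟨Or.inl ha.1, ha.2⟩
      (hT.trans (Set.sdiff_subset_sdiff_left Set.subset_union_right)),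
    by rw [Set.encard_insert_of_notMem haT, hTk], ?_, ?_⟩
  · calc (insert a T ∩ E₁).encard ≤ ({a} : Set α).encard := Set.encard_le_encard
          fun b ⟨hb, hb₁⟩ => hb.resolve_right fun hbT => hd.notMem_of_mem_left hb₁ (hT hbT).1
      _ ≤ k := by simpa using hk
  · calc (insert a T ∩ E₂).encard ≤ T.encard := Set.encard_le_encard
          fun b ⟨hb, hb₂⟩ => hb.resolve_left fun hba => hd.notMem_of_mem_left (hba ▸ ha.1) hb₂
      _ = k := hTk

/-- `D_{k+2}` spelled out: `P_{k+1}` lives on `E₁ ∪ E₂`, `y` spans the `U_{1,1}` summand and `x`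
is the freely added element. -/
structure IsDOn (M : Matroid α) (k : ℕ) (E₁ E₂ : Set α) (x y : α) : Prop where
  disjoint : Disjoint E₁ E₂
  x_notMem : x ∉ E₁ ∪ E₂
  y_notMem : y ∉ E₁ ∪ E₂
  ne : x ≠ y
  encard_left : E₁.encard = k + 1
  encard_right : E₂.encard = k + 1
  ground_eq : M.E = insert x (insert y (E₁ ∪ E₂))
  indep_iff : ∀ I, M.Indep I ↔ I ⊆ M.E ∧ I.encard ≤ k + 2 ∧ (I ∩ (E₁ ∪ E₂)).encard ≤ k + 1 ∧
    (I ∩ E₁).encard ≤ k ∧ (I ∩ E₂).encard ≤ k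

namespace IsDOn

variable {M : Matroid α} {k : ℕ} {E₁ E₂ B C T : Set α} {x y : α} (h : IsDOn M k E₁ E₂ x y)
include h

theorem encard_insert_insert (hT : T ⊆ E₁ ∪ E₂) :
    (insert x (insert y T)).encard = T.encard + 2 := by
  have hyT : y ∉ T := fun hy => h.y_notMem (hT hy)
  have hxT : x ∉ insert y T := fun hx => hx.elim h.ne fun hx => h.x_notMem (hT hx)
  rw [Set.encard_insert_of_notMem hxT, Set.encard_insert_of_notMem hyT, add_assoc,
    one_add_one_eq_two]

theorem indep_insert_insert_iff (hT : T ⊆ E₁ ∪ E₂) :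
    M.Indep (insert x (insert y T)) ↔ T.encard ≤ k := by
  have hnot : ∀ {E}, E ⊆ E₁ ∪ E₂ → insert x (insert y T) ∩ E = T ∩ E := fun hE => by
    rw [Set.insert_inter_of_notMem fun hx => h.x_notMem (hE hx),
      Set.insert_inter_of_notMem fun hy => h.y_notMem (hE hy)]
  rw [h.indep_iff, hnot subset_rfl, hnot Set.subset_union_left, hnot Set.subset_union_right,
    Set.inter_eq_left.2 hT, h.encard_insert_insert hT, ENat.add_le_add_iff_right (by simp)]
  have hsub : insert x (insert y T) ⊆ M.E := by
    rw [h.ground_eq]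
    exact Set.insert_subset_insert (Set.insert_subset_insert hT)
  refine ⟨fun hi => hi.2.1, fun hTk => ⟨hsub, hTk, hTk.trans le_self_add, ?_, ?_⟩⟩ <;>
    exact (Set.encard_le_encard Set.inter_subset_left).trans hTk

theorem isBase_iff : M.IsBase B ↔ M.Indep B ∧ B.encard = k + 2 := by
  obtain ⟨T, hT, hTk⟩ := Set.exists_subset_encard_eq (h.encard_left.ge.trans' le_self_add)
  have hTX : T ⊆ E₁ ∪ E₂ := hT.trans Set.subset_union_left
  exact_mod_cast Matroid.isBase_iff_indep_encard_eq (B := B) (r := k + 2)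
    ((h.indep_insert_insert_iff hTX).2 hTk.le) (by rw [h.encard_insert_insert hTX, hTk]; rfl)
    fun J hJ => ((h.indep_iff J).1 hJ).2.1

theorem exists_isBase_insert (hk : 1 ≤ k) {z : α} (hz : z = x ∨ z = y)
    (hC : (C ∩ (E₁ ∪ E₂)).encard ≤ 1) : ∃ B ⊆ (E₁ ∪ E₂) \ C, M.IsBase (insert z B) := by
  obtain ⟨B, hBC, hBk, hB₁, hB₂⟩ := exists_subset_sdiff_encard_eq_inter_le hk h.disjoint
    h.encard_left h.encard_right hC
  have hBX : B ⊆ E₁ ∪ E₂ := hBC.trans Set.sdiff_subset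
  have hzX : z ∉ E₁ ∪ E₂ := by rcases hz with rfl | rfl; exacts [h.x_notMem, h.y_notMem]
  have hzB : z ∉ B := fun hzB => hzX (hBX hzB)
  have hsub : insert z B ⊆ M.E := by
    rw [h.ground_eq]
    refine Set.insert_subset (by rcases hz with rfl | rfl <;> simp) ?_
    exact hBX.trans ((Set.subset_insert _ _).trans (Set.subset_insert _ _))
  refine ⟨B, hBC, h.isBase_iff.2 ⟨(h.indep_iff _).2 ⟨hsub, ?_⟩, ?_⟩⟩
  · rw [Set.insert_inter_of_notMem hzX, Set.insert_inter_of_notMem fun hz => hzX (Or.inl hz),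
      Set.insert_inter_of_notMem fun hz => hzX (Or.inr hz), Set.inter_eq_left.2 hBX,
      Set.encard_insert_of_notMem hzB, hBk, add_assoc, one_add_one_eq_two]
    exact ⟨le_rfl, le_rfl, hB₁, hB₂⟩
  · rw [Set.encard_insert_of_notMem hzB, hBk, add_assoc, one_add_one_eq_two]

theorem subset_union_of_notMem_of_notMem (hB : B ⊆ M.E) (hx : x ∉ B) (hy : y ∉ B) :
    B ⊆ E₁ ∪ E₂ := by
  rwa [h.ground_eq, Set.subset_insert_iff_of_notMem hx, Set.subset_insert_iff_of_notMem hy] at hB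

theorem isCircuit_dual_pair (hk : 1 ≤ k) : _root_.IsCircuit M✶ {x, y} := by
  rw [isCircuit_iff_matroid_isCircuit]
  refine Matroid.isCircuit_dual_pair (fun B hB => ?_) ?_ ?_
  · by_contra! hxy
    obtain ⟨hBi, hBk⟩ := h.isBase_iff.1 hB
    have hBX := h.subset_union_of_notMem_of_notMem hBi.subset_ground hxy.1 hxy.2
    have hle := ((h.indep_iff B).1 hBi).2.2.1
    rw [Set.inter_eq_left.2 hBX, hBk, ENat.add_le_add_iff_left (by simp)] at hle
    exact absurd hle (by decide)
  · obtain ⟨B, hBX, hB⟩ := h.exists_isBase_insert hk (Or.inr rfl) (C := ∅) (by simp)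
    exact ⟨_, hB, fun hx => hx.elim h.ne fun hxB => h.x_notMem (hBX hxB).1⟩
  · obtain ⟨B, hBX, hB⟩ := h.exists_isBase_insert hk (Or.inl rfl) (C := ∅) (by simp)
    exact ⟨_, hB, fun hy => hy.elim h.ne.symm fun hyB => h.y_notMem (hBX hyB).1⟩

theorem exists_isBase_disjoint (hk : 1 ≤ k) (hCE : C ⊆ M.E) (hC2 : C.encard ≤ 2)
    (hxyC : ¬ {x, y} ⊆ C) : ∃ B, M.IsBase B ∧ Disjoint C B := by
  by_cases hmem : x ∈ C ∨ y ∈ C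
  · obtain ⟨z, hz, hzC⟩ : ∃ z, (z = x ∨ z = y) ∧ z ∉ C := by
      by_contra! hall
      exact hxyC (Set.pair_subset (hall x (Or.inl rfl)) (hall y (Or.inr rfl)))
    obtain ⟨w, hwC, hwX⟩ : ∃ w ∈ C, w ∉ E₁ ∪ E₂ :=
      hmem.elim (⟨x, ·, h.x_notMem⟩) (⟨y, ·, h.y_notMem⟩)
    have hCX : (C ∩ (E₁ ∪ E₂)).encard ≤ 1 := by
      rw [← ENat.add_le_add_iff_right ENat.one_ne_top, one_add_one_eq_two]
      calc (C ∩ (E₁ ∪ E₂)).encard + 1 = (insert w (C ∩ (E₁ ∪ E₂))).encard :=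
            (Set.encard_insert_of_notMem fun hw => hwX hw.2).symm
        _ ≤ C.encard := Set.encard_le_encard (Set.insert_subset hwC Set.inter_subset_left)
        _ ≤ 2 := hC2
    obtain ⟨B, hBC, hB⟩ := h.exists_isBase_insert hk hz hCX
    refine ⟨_, hB, Set.disjoint_left.2 fun a haC haB => ?_⟩
    rcases haB with rfl | haB
    exacts [hzC haC, (hBC haB).2 haC]
  · rw [not_or] at hmem
    have hCX := h.subset_union_of_notMem_of_notMem hCE hmem.1 hmem.2
    have hX : (k + 2 : ℕ∞) ≤ (E₁ ∪ E₂).encard := by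
      rw [Set.encard_union_eq h.disjoint, h.encard_left, h.encard_right]
      exact_mod_cast (by omega : k + 2 ≤ k + 1 + (k + 1))
    obtain ⟨T, hT, hTk⟩ := Set.exists_subset_encard_eq <| le_encard_sdiff_of_encard_inter_le
      (by simp) hX ((Set.encard_le_encard Set.inter_subset_right).trans hC2)
    have hTX : T ⊆ E₁ ∪ E₂ := hT.trans Set.sdiff_subset
    refine ⟨_, h.isBase_iff.2 ⟨(h.indep_insert_insert_iff hTX).2 hTk.le,
      by rw [h.encard_insert_insert hTX, hTk]⟩, Set.disjoint_left.2 fun a haC haB => ?_⟩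
    rcases haB with rfl | rfl | haT
    exacts [hmem.1 haC, hmem.2 haC, (hT haT).2 haC]

theorem eq_pair_of_isCircuit_dual (hk : 1 ≤ k) (hC : _root_.IsCircuit M✶ C)
    (hC2 : C.encard = 2) : C = {x, y} := by
  rw [isCircuit_iff_matroid_isCircuit] at hC
  by_contra hne
  obtain ⟨B, hB, hCB⟩ := h.exists_isBase_disjoint hk hC.subset_ground hC2.le fun hxy =>
    hne ((Set.finite_of_encard_le_coe (k := 2) hC2.le).eq_of_subset_of_encard_le' hxy
      (by rw [hC2, Set.encard_pair h.ne])).symm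
  exact hC.dep.not_indep (Matroid.dual_indep_iff_exists'.2 ⟨hC.subset_ground, B, hB, hCB⟩)

theorem isUnifIso_contract : IsUnifIso k (2 * k + 2) (MCon M {x, y}) := by
  have hxy : M.Indep {x, y} := by
    simpa using (h.indep_insert_insert_iff (T := ∅) (Set.empty_subset _)).2 (by simp)
  have hE : (M ／ {x, y}).E = E₁ ∪ E₂ := by
    rw [Matroid.contract_ground, h.ground_eq]
    ext a
    simp only [Set.mem_sdiff, Set.mem_insert_iff, Set.mem_singleton_iff]
    grind [h.x_notMem, h.y_notMem]
  show IsUnifIso k (2 * k + 2) (M ／ {x, y})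
  refine ⟨?_, fun I => ?_⟩
  · rw [hE, Set.encard_union_eq h.disjoint, h.encard_left, h.encard_right]
    push_cast
    ring
  rw [hxy.contract_indep_iff, hE, Set.union_insert, Set.union_singleton]
  constructor
  · rintro ⟨hdisj, hI⟩
    have hIX : I ⊆ E₁ ∪ E₂ := h.subset_union_of_notMem_of_notMem
      ((Set.subset_insert _ _).trans ((Set.subset_insert _ _).trans hI.subset_ground))
      (fun hx => hdisj.notMem_of_mem_left hx (Or.inl rfl))
      (fun hy => hdisj.notMem_of_mem_left hy (Or.inr rfl))
    exact ⟨hIX, (h.indep_insert_insert_iff hIX).1 hI⟩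
  · rintro ⟨hIX, hIk⟩
    refine ⟨Set.disjoint_left.2 fun a haI ha => ?_, (h.indep_insert_insert_iff hIX).2 hIk⟩
    rcases ha with rfl | rfl
    exacts [h.x_notMem (hIX haI), h.y_notMem (hIX haI)]

end IsDOn

theorem IsD.exists_isDOn {M : Matroid α} {k : ℕ} (hk : 1 ≤ k) (hM : IsD (k + 2) M) :
    ∃ E₁ E₂ x y, IsDOn M k E₁ E₂ x y := by
  obtain ⟨P, U, S, x, hP, hU, hS, hM⟩ := hM
  obtain ⟨E₁, E₂, hd, h₁, h₂, hPE, hP⟩ := IsP.exists_indep_iff (k := k) hP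
  obtain ⟨y, hUE⟩ := Set.encard_eq_one.1 hU.1
  have hSE : S.E = insert y (E₁ ∪ E₂) := by rw [hS.2.1, hPE, hUE, Set.union_singleton]
  have hyX : y ∉ E₁ ∪ E₂ := hPE ▸ hS.1.notMem_of_mem_right (hUE ▸ rfl)
  have hxS : x ∉ insert y (E₁ ∪ E₂) := hSE ▸ hM.1
  have hS' : ∀ J, S.Indep J ↔ J ⊆ S.E ∧ P.Indep (J ∩ (E₁ ∪ E₂)) :=
    hPE ▸ hS.indep_iff_of_indep_ground ((hU.2 _).2 ⟨subset_rfl, hU.1.le⟩)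
  have hrank : S.eRank = k + 2 := by
    obtain ⟨B, hBX, hBk, hB₁, hB₂⟩ :=
      exists_subset_sdiff_encard_eq_inter_le (C := ∅) hk hd h₁ h₂ (by simp)
    rw [Set.sdiff_empty] at hBX
    refine Matroid.eRank_eq_of_indep_of_forall_encard_le (I := insert y B) ?_ ?_ fun J hJ => ?_
    · refine (hS' _).2 ⟨hSE ▸ Set.insert_subset_insert hBX, ?_⟩
      rw [Set.insert_inter_of_notMem hyX, Set.inter_eq_left.2 hBX]
      exact (hP B).2 ⟨hBX, hBk.le, hB₁, hB₂⟩
    · rw [Set.encard_insert_of_notMem fun hy => hyX (hBX hy), hBk, add_assoc, one_add_one_eq_two]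
    · obtain ⟨hJS, hJP⟩ := (hS' J).1 hJ
      have hJ : J ⊆ insert y (J ∩ (E₁ ∪ E₂)) := fun a ha =>
        (hSE ▸ hJS ha).imp id fun haX => ⟨ha, haX⟩
      calc J.encard ≤ (J ∩ (E₁ ∪ E₂)).encard + 1 :=
            (Set.encard_le_encard hJ).trans (Set.encard_insert_le _ _)
        _ ≤ k + 1 + 1 := add_le_add_left ((hP _).1 hJP).2.1 1
        _ = k + 2 := by rw [add_assoc, one_add_one_eq_two]
  refine ⟨E₁, E₂, x, y, ⟨hd, fun hx => hxS (Or.inr hx), hyX, fun hxy => hxS (Or.inl hxy),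
    h₁, h₂, hSE ▸ hM.2.1, fun I => ?_⟩⟩
  have hIX : I \ {x} ∩ (E₁ ∪ E₂) = I ∩ (E₁ ∪ E₂) := by
    ext a
    simp only [Set.mem_inter_iff, Set.mem_sdiff, Set.mem_singleton_iff]
    exact ⟨fun ha => ⟨ha.1.1, ha.2⟩, fun ha => ⟨⟨ha.1, fun hax => hxS (Or.inr (hax ▸ ha.2))⟩, ha.2⟩⟩
  rw [hM.indep_iff, hrank, hS', hP, hIX, Set.sdiff_singleton_subset_iff, ← hM.2.1,
    Set.inter_assoc, Set.inter_assoc, Set.inter_eq_right.2 Set.subset_union_left,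
    Set.inter_eq_right.2 Set.subset_union_right]
  simp only [Set.inter_subset_right, true_and]
  tauto

/-- For every `n ≥ 5`, the matroid `D_n` has a unique 2-element cocircuit `{x, y}` (its
unique series pair), and the contraction `D_n / {x, y}` is isomorphic to the uniform
matroid `U_{n-2, 2n-2}`. -/
theorem isD_series_pair (n : ℕ) (hn : 5 ≤ n) (M : Matroid α) (hM : IsD n M) :
    ∃ x y : α, x ≠ y ∧ _root_.IsCircuit M✶ {x, y} ∧
      (∀ C : Set α, _root_.IsCircuit M✶ C → C.encard = 2 → C = {x, y}) ∧
      IsUnifIso (n - 2) (2 * n - 2) (MCon M {x, y}) := by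
  obtain ⟨k, rfl⟩ : ∃ k, n = k + 2 := ⟨n - 2, by omega⟩
  have hk : 1 ≤ k := by omega
  obtain ⟨E₁, E₂, x, y, hD⟩ := hM.exists_isDOn hk
  rw [show k + 2 - 2 = k by omega, show 2 * (k + 2) - 2 = 2 * k + 2 by omega]
  exact ⟨x, y, hD.ne, hD.isCircuit_dual_pair hk,
    fun C hC hC2 => hD.eq_pair_of_isCircuit_dual hk hC hC2, hD.isUnifIso_contract⟩
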